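/- Let L be a partial group which is the internal semidirect product of a partial subgroup X with a partial subgroup N. Then for every x ∈ X, the conjugation map c_x: N → N, n ↦ n^x, is a well-defined automorphism of the partial group N, and the map φ: X → Aut(N), x ↦ c_x, is a homomorphism of partial groups. In particular (n^x)^y = n^{xy} for all x, y ∈ X with (x,y) ∈ D(L) and all n ∈ N. -/
import Mathlib


universe u v

/-- A partial group: a set `L` with a domain `D ⊆ W(L)` of words, a (total extension of the)
partial product `Pi`, and an involutory inversion, satisfying axioms (PG1)-(PG4).
The value of `Pi` outside `D` is irrelevant. -/
structure PartialGroup (L : Type u) : Type u where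
  D : Set (List L)
  Pi : List L → L
  inv : L → L
  inv_inv : ∀ g, inv (inv g) = g
  singleton_mem : ∀ g, [g] ∈ D
  append_left_mem : ∀ {u v : List L}, u ++ v ∈ D → u ∈ D
  append_right_mem : ∀ {u v : List L}, u ++ v ∈ D → v ∈ D
  Pi_singleton : ∀ g, Pi [g] = g
  pg3_mem : ∀ u v w : List L, u ++ v ++ w ∈ D → u ++ [Pi v] ++ w ∈ D
  pg3_eq : ∀ u v w : List L, u ++ v ++ w ∈ D → Pi (u ++ v ++ w) = Pi (u ++ [Pi v] ++ w)
  pg4_mem : ∀ w ∈ D, (List.map inv w).reverse ++ w ∈ D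
  pg4_eq : ∀ w ∈ D, Pi ((List.map inv w).reverse ++ w) = Pi []

namespace PartialGroup

variable {L : Type u} {L' : Type v}

/-- Inversion of a word: `(g_1,...,g_k)⁻¹ = (g_k⁻¹,...,g_1⁻¹)`. -/
def wInv (P : PartialGroup L) (w : List L) : List L := (w.map P.inv).reverse

/-- The identity `1 = Π(∅)`. -/
def one (P : PartialGroup L) : L := P.Pi []

/-- Conjugation `x^g = Π(g⁻¹, x, g)`. -/
def cnj (P : PartialGroup L) (g x : L) : L := P.Pi [P.inv g, x, g]

/-- `x ∈ D(g)`, i.e. `(g⁻¹, x, g) ∈ D(L)`. -/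
def memD (P : PartialGroup L) (g x : L) : Prop := [P.inv g, x, g] ∈ P.D

/-- `H` is a partial subgroup of `L`. -/
def IsPartialSubgroup (P : PartialGroup L) (H : Set L) : Prop :=
  H.Nonempty ∧ (∀ g ∈ H, P.inv g ∈ H) ∧ ∀ w ∈ P.D, (∀ x ∈ w, x ∈ H) → P.Pi w ∈ H

/-- `N` is a partial normal subgroup of `L`. -/
def IsPartialNormal (P : PartialGroup L) (N : Set L) : Prop :=
  P.IsPartialSubgroup N ∧ ∀ g : L, ∀ n ∈ N, P.memD g n → P.cnj g n ∈ N

/-- `H` is a subgroup of `L`: a partial subgroup with `W(H) ⊆ D(L)`. -/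
def IsSubgroup (P : PartialGroup L) (H : Set L) : Prop :=
  P.IsPartialSubgroup H ∧ ∀ w : List L, (∀ x ∈ w, x ∈ H) → w ∈ P.D

/-- Homomorphism of partial groups. -/
def IsHom (P : PartialGroup L) (P' : PartialGroup L') (φ : L → L') : Prop :=
  ∀ w ∈ P.D, w.map φ ∈ P'.D ∧ φ (P.Pi w) = P'.Pi (w.map φ)

/-- Isomorphism of partial groups: a bijective homomorphism with `D(L)^φ = D(L')`. -/
def IsIso (P : PartialGroup L) (P' : PartialGroup L') (φ : L → L') : Prop :=
  Function.Bijective φ ∧ P.IsHom P' φ ∧ List.map φ '' P.D = P'.D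

end PartialGroup

open PartialGroup

/-- For a list of pairs `((x₁,n₁),...,(xₖ,nₖ))` (with `xᵢ ∈ X`, `nᵢ ∈ N`), the word
`w_N = (n₁^{Π(x₂,...,xₖ)}, n₂^{Π(x₃,...,xₖ)}, ..., nₖ)`. -/
def sdn {L : Type u} (P : PartialGroup L) : List (L × L) → List L
  | [] => []
  | q :: rest => P.cnj (P.Pi (rest.map Prod.fst)) q.2 :: sdn P rest

/-- `L` is the internal semidirect product of the partial subgroup `X` with the partial
subgroup `N`: axioms (SD1), (SD2), (SD3). -/
structure IsIntSemidirect {L : Type u} (P : PartialGroup L) (X N : Set L) : Prop where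
  subX : P.IsPartialSubgroup X
  subN : P.IsPartialSubgroup N
  sd1 : ∀ x ∈ X, (∀ n ∈ N, P.memD x n) ∧ P.cnj x '' N = N
  sd2 : ∀ g : L, ∃! q : L × L, q.1 ∈ X ∧ q.2 ∈ N ∧ [q.1, q.2] ∈ P.D ∧ g = P.Pi [q.1, q.2]
  sd3 : ∀ q : List (L × L), (∀ r ∈ q, r.1 ∈ X ∧ r.2 ∈ N) →
      ((q.map fun r => P.Pi [r.1, r.2]) ∈ P.D ↔
        q.map Prod.fst ∈ P.D ∧ sdn P q ∈ P.D) ∧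
      ((q.map fun r => P.Pi [r.1, r.2]) ∈ P.D →
        P.Pi (q.map fun r => P.Pi [r.1, r.2]) =
          P.Pi [P.Pi (q.map Prod.fst), P.Pi (sdn P q)])


namespace PartialGroup

variable {L : Type u} (P : PartialGroup L)

lemma insert_one_mem {u v : List L} (h : u ++ v ∈ P.D) : u ++ [P.one] ++ v ∈ P.D := by
  have := P.pg3_mem u [] v (by simpa using h)
  simpa [one] using this

lemma insert_one_eq {u v : List L} (h : u ++ v ∈ P.D) :
    P.Pi (u ++ [P.one] ++ v) = P.Pi (u ++ v) := by
  have := P.pg3_eq u [] v (by simpa using h)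
  simp only [List.append_nil, List.nil_append] at this
  exact this.symm

lemma one_cons_mem {w : List L} (h : w ∈ P.D) : P.one :: w ∈ P.D := by
  simpa using P.insert_one_mem (u := []) (v := w) (by simpa using h)

lemma pi_one_cons {w : List L} (h : w ∈ P.D) : P.Pi (P.one :: w) = P.Pi w := by
  simpa using P.insert_one_eq (u := []) (v := w) (by simpa using h)

lemma append_one_mem {w : List L} (h : w ∈ P.D) : w ++ [P.one] ∈ P.D := by
  simpa using P.insert_one_mem (u := w) (v := []) (by simpa using h)

lemma pi_append_one {w : List L} (h : w ∈ P.D) : P.Pi (w ++ [P.one]) = P.Pi w := by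
  simpa using P.insert_one_eq (u := w) (v := []) (by simpa using h)

lemma pi_pair_one (g : L) : P.Pi [g, P.one] = g := by
  have := P.pi_append_one (w := [g]) (P.singleton_mem g)
  simpa [P.Pi_singleton] using this

lemma pi_one_pair (g : L) : P.Pi [P.one, g] = g := by
  have := P.pi_one_cons (w := [g]) (P.singleton_mem g)
  simpa [P.Pi_singleton] using this

lemma pair_one_mem (g : L) : [g, P.one] ∈ P.D := by
  simpa using P.append_one_mem (P.singleton_mem g)

lemma one_pair_mem (g : L) : [P.one, g] ∈ P.D := P.one_cons_mem (P.singleton_mem g)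

lemma inv_pair_mem (g : L) : [P.inv g, g] ∈ P.D := by
  simpa using P.pg4_mem [g] (P.singleton_mem g)

lemma inv_pair_eq (g : L) : P.Pi [P.inv g, g] = P.one := by
  simpa [one] using P.pg4_eq [g] (P.singleton_mem g)

lemma pair_inv_mem (g : L) : [g, P.inv g] ∈ P.D := by
  have := P.pg4_mem [P.inv g] (P.singleton_mem _)
  simpa [P.inv_inv] using this

lemma pair_inv_eq (g : L) : P.Pi [g, P.inv g] = P.one := by
  have := P.pg4_eq [P.inv g] (P.singleton_mem _)
  simpa [one, P.inv_inv] using this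

lemma inv_one : P.inv P.one = P.one := by
  have h1 := P.inv_pair_eq P.one
  rwa [P.pi_pair_one (P.inv P.one)] at h1

@[simp] lemma cnj_one_right (g : L) : P.cnj g P.one = P.one := by
  unfold cnj
  have h1 : P.Pi ([P.inv g] ++ [P.one] ++ [g]) = P.Pi ([P.inv g] ++ [g]) :=
    P.insert_one_eq (by simpa using P.inv_pair_mem g)
  simpa using h1.trans (P.inv_pair_eq g)

lemma cnj_one_left (n : L) : P.cnj P.one n = n := by
  unfold cnj
  rw [P.inv_one]
  have h1 : P.Pi ([P.one, n] ++ [P.one]) = P.Pi [P.one, n] :=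
    P.pi_append_one (P.one_pair_mem n)
  simpa [P.pi_one_pair] using h1

lemma cons_inv_mem {a : L} {w : List L} (h : a :: w ∈ P.D) :
    P.inv a :: a :: w ∈ P.D := by
  have h2 := P.pg4_mem _ h
  have h3 : (List.map P.inv w).reverse ++ (P.inv a :: a :: w) ∈ P.D := by
    simpa [List.append_assoc] using h2
  exact P.append_right_mem h3

lemma cons_inv_eq {a : L} {w : List L} (h : a :: w ∈ P.D) :
    P.Pi (P.inv a :: a :: w) = P.Pi w := by
  have hw : w ∈ P.D := P.append_right_mem (u := [a]) h
  have h3 := P.pg3_eq [] [P.inv a, a] w (by simpa using P.cons_inv_mem h)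
  simp only [List.nil_append] at h3
  rw [show ([P.inv a, a] : List L) ++ w = P.inv a :: a :: w from rfl] at h3
  rw [h3, P.inv_pair_eq]
  simpa using P.pi_one_cons hw

lemma left_cancel {a b b' : L} (hab : [a, b] ∈ P.D) (hab' : [a, b'] ∈ P.D)
    (he : P.Pi [a, b] = P.Pi [a, b']) : b = b' := by
  have key : ∀ c : L, [a, c] ∈ P.D → P.Pi [P.inv a, P.Pi [a, c]] = c := by
    intro c hc
    have h1 : P.inv a :: a :: [c] ∈ P.D := P.cons_inv_mem hc
    have h2 : P.Pi (P.inv a :: a :: [c]) = c := by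
      simpa [P.Pi_singleton] using P.cons_inv_eq hc
    have h3 := P.pg3_eq [P.inv a] [a, c] [] (by simpa using h1)
    simp only [List.append_nil, List.nil_append, List.singleton_append,
      List.cons_append] at h3
    rw [← h3, h2]
  rw [← key b hab, ← key b' hab', he]

lemma triple_one_one_mem (c : L) : [c, P.one, P.one] ∈ P.D :=
  P.append_one_mem (P.pair_one_mem c)

lemma pi_triple_one_one (c : L) : P.Pi [c, P.one, P.one] = c := by
  have := P.pi_append_one (P.pair_one_mem c)
  simpa [P.pi_pair_one] using this

lemma one_mid_mem (c : L) : [P.one, c, P.one] ∈ P.D := P.one_cons_mem (P.pair_one_mem c)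

lemma pi_one_mid (c : L) : P.Pi [P.one, c, P.one] = c := by
  have := P.pi_one_cons (P.pair_one_mem c)
  simpa [P.pi_pair_one] using this

@[simp] lemma cnj_pi_nil (n : L) : P.cnj (P.Pi []) n = n := P.cnj_one_left n

lemma insert_ones {l : List L} (hl : ∀ a ∈ l, a = P.one) :
    ∀ {u v : List L}, u ++ v ∈ P.D →
      (u ++ l ++ v ∈ P.D ∧ P.Pi (u ++ l ++ v) = P.Pi (u ++ v)) := by
  induction l with
  | nil => intro u v h; exact ⟨by simpa using h, by simp⟩
  | cons a l ih =>
    intro u v h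
    have ha : a = P.one := hl a (by simp)
    have h1 : (u ++ [a]) ++ v ∈ P.D := by
      rw [ha]; simpa [List.append_assoc] using P.insert_one_mem h
    obtain ⟨hm, he⟩ := ih (fun b hb => hl b (by simp [hb])) h1
    have hre : u ++ (a :: l) ++ v = (u ++ [a]) ++ l ++ v := by simp
    refine ⟨by rw [hre]; exact hm, ?_⟩
    rw [hre, he]
    have : P.Pi ((u ++ [a]) ++ v) = P.Pi (u ++ v) := by
      rw [ha]; simpa [List.append_assoc] using P.insert_one_eq h
    exact this

end PartialGroup


section SD

variable {L : Type u} {P : PartialGroup L} {X N : Set L} (h : IsIntSemidirect P X N)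
include h

lemma nil_memD : ([] : List L) ∈ P.D := by
  obtain ⟨n, hn⟩ := h.subN.1
  exact P.append_left_mem (u := []) (v := [n]) (by simpa using P.singleton_mem n)

lemma one_mem_X : P.one ∈ X := h.subX.2.2 [] (nil_memD h) (by simp)

lemma one_mem_N : P.one ∈ N := h.subN.2.2 [] (nil_memD h) (by simp)

lemma cnj_mem_N {x n : L} (hx : x ∈ X) (hn : n ∈ N) : P.cnj x n ∈ N := by
  have := (h.sd1 x hx).2
  rw [← this]
  exact Set.mem_image_of_mem _ hn

lemma pair_XN_mem {x n : L} (hx : x ∈ X) (hn : n ∈ N) : [x, n] ∈ P.D := by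
  have hs := h.sd3 [(x, P.one), (P.one, n)] (by
    intro r hr
    simp only [List.mem_cons, List.mem_singleton, List.not_mem_nil, or_false] at hr
    rcases hr with rfl | rfl
    · exact ⟨hx, one_mem_N h⟩
    · exact ⟨one_mem_X h, hn⟩)
  have hword : List.map (fun r : L × L => P.Pi [r.1, r.2]) [(x, P.one), (P.one, n)]
      = [x, n] := by simp [P.pi_pair_one, P.pi_one_pair]
  have hfst : List.map Prod.fst [(x, P.one), (P.one, n)] = [x, P.one] := by simp
  have hsdn : sdn P [(x, P.one), (P.one, n)] = [P.one, n] := by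
    simp [sdn]
  rw [hword, hfst, hsdn] at hs
  exact hs.1.mpr ⟨P.pair_one_mem x, P.one_pair_mem n⟩

lemma comm_rel {x n : L} (hx : x ∈ X) (hn : n ∈ N) :
    [n, x] ∈ P.D ∧ P.Pi [n, x] = P.Pi [x, P.cnj x n] := by
  have hs := h.sd3 [(P.one, n), (x, P.one)] (by
    intro r hr
    simp only [List.mem_cons, List.mem_singleton, List.not_mem_nil, or_false] at hr
    rcases hr with rfl | rfl
    · exact ⟨one_mem_X h, hn⟩
    · exact ⟨hx, one_mem_N h⟩)
  have hword : List.map (fun r : L × L => P.Pi [r.1, r.2]) [(P.one, n), (x, P.one)]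
      = [n, x] := by simp [P.pi_pair_one, P.pi_one_pair]
  have hfst : List.map Prod.fst [(P.one, n), (x, P.one)] = [P.one, x] := by simp
  have hsdn : sdn P [(P.one, n), (x, P.one)] = [P.cnj x n, P.one] := by
    simp [sdn, P.Pi_singleton]
  rw [hword, hfst, hsdn] at hs
  have hmem : [n, x] ∈ P.D := hs.1.mpr ⟨P.one_pair_mem x, P.pair_one_mem _⟩
  refine ⟨hmem, ?_⟩
  have := hs.2 hmem
  rwa [P.pi_one_pair, P.pi_pair_one] at this

lemma conj_word3 {x y n : L} (hx : x ∈ X) (hy : y ∈ X) (hxy : [x, y] ∈ P.D)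
    (hn : n ∈ N) :
    [n, x, y] ∈ P.D ∧ P.Pi [n, x, y] = P.Pi [P.Pi [x, y], P.cnj (P.Pi [x, y]) n] := by
  have hs := h.sd3 [(P.one, n), (x, P.one), (y, P.one)] (by
    intro r hr
    simp only [List.mem_cons, List.mem_singleton, List.not_mem_nil, or_false] at hr
    rcases hr with rfl | rfl | rfl
    · exact ⟨one_mem_X h, hn⟩
    · exact ⟨hx, one_mem_N h⟩
    · exact ⟨hy, one_mem_N h⟩)
  have hword : List.map (fun r : L × L => P.Pi [r.1, r.2])
      [(P.one, n), (x, P.one), (y, P.one)] = [n, x, y] := by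
    simp [P.pi_pair_one, P.pi_one_pair]
  have hfst : List.map Prod.fst [(P.one, n), (x, P.one), (y, P.one)]
      = [P.one, x, y] := by simp
  have hsdn : sdn P [(P.one, n), (x, P.one), (y, P.one)]
      = [P.cnj (P.Pi [x, y]) n, P.one, P.one] := by
    simp [sdn, P.Pi_singleton]
  rw [hword, hfst, hsdn] at hs
  have hmem : [n, x, y] ∈ P.D :=
    hs.1.mpr ⟨P.one_cons_mem hxy, P.triple_one_one_mem _⟩
  refine ⟨hmem, ?_⟩
  have := hs.2 hmem
  rwa [P.pi_one_cons hxy, P.pi_triple_one_one] at this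

lemma mid_word3 {x y m : L} (hx : x ∈ X) (hy : y ∈ X) (hxy : [x, y] ∈ P.D)
    (hm : m ∈ N) :
    [x, m, y] ∈ P.D ∧ P.Pi [x, m, y] = P.Pi [P.Pi [x, y], P.cnj y m] := by
  have hs := h.sd3 [(x, P.one), (P.one, m), (y, P.one)] (by
    intro r hr
    simp only [List.mem_cons, List.mem_singleton, List.not_mem_nil, or_false] at hr
    rcases hr with rfl | rfl | rfl
    · exact ⟨hx, one_mem_N h⟩
    · exact ⟨one_mem_X h, hm⟩
    · exact ⟨hy, one_mem_N h⟩)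
  have hword : List.map (fun r : L × L => P.Pi [r.1, r.2])
      [(x, P.one), (P.one, m), (y, P.one)] = [x, m, y] := by
    simp [P.pi_pair_one, P.pi_one_pair]
  have hfst : List.map Prod.fst [(x, P.one), (P.one, m), (y, P.one)]
      = [x, P.one, y] := by simp
  have hsdn : sdn P [(x, P.one), (P.one, m), (y, P.one)]
      = [P.one, P.cnj y m, P.one] := by
    simp [sdn, P.Pi_singleton]
  rw [hword, hfst, hsdn] at hs
  have hfmem : [x, P.one, y] ∈ P.D := by
    simpa using P.insert_one_mem (u := [x]) (v := [y]) (by simpa using hxy)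
  have hfeq : P.Pi [x, P.one, y] = P.Pi [x, y] := by
    simpa using P.insert_one_eq (u := [x]) (v := [y]) (by simpa using hxy)
  have hmem : [x, m, y] ∈ P.D := hs.1.mpr ⟨hfmem, P.one_mid_mem _⟩
  refine ⟨hmem, ?_⟩
  have := hs.2 hmem
  rwa [hfeq, P.pi_one_mid] at this

lemma cnj_cnj {x y n : L} (hx : x ∈ X) (hy : y ∈ X) (hxy : [x, y] ∈ P.D)
    (hn : n ∈ N) : P.cnj y (P.cnj x n) = P.cnj (P.Pi [x, y]) n := by
  have hzX : P.Pi [x, y] ∈ X := by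
    refine h.subX.2.2 [x, y] hxy ?_
    intro g hg
    simp only [List.mem_cons, List.mem_singleton, List.not_mem_nil, or_false] at hg
    rcases hg with rfl | rfl <;> assumption
  have hm : P.cnj x n ∈ N := cnj_mem_N h hx hn
  obtain ⟨h3m, h3e⟩ := conj_word3 h hx hy hxy hn
  obtain ⟨h2m, h2e⟩ := comm_rel h hx hn
  obtain ⟨h4m, h4e⟩ := mid_word3 h hx hy hxy hm
  have e2 : P.Pi [n, x, y] = P.Pi [P.Pi [n, x], y] := by
    have := P.pg3_eq [] [n, x] [y] (by simpa using h3m)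
    simpa using this
  have e4 : P.Pi [P.Pi [x, P.cnj x n], y] = P.Pi [x, P.cnj x n, y] := by
    have := P.pg3_eq [] [x, P.cnj x n] [y] (by simpa using h4m)
    simpa using this.symm
  have main : P.Pi [P.Pi [x, y], P.cnj (P.Pi [x, y]) n]
      = P.Pi [P.Pi [x, y], P.cnj y (P.cnj x n)] := by
    rw [← h3e, e2, h2e, e4, h4e]
  exact (P.left_cancel (pair_XN_mem h hzX (cnj_mem_N h hzX hn))
    (pair_XN_mem h hzX (cnj_mem_N h hy hm)) main).symm

end SD


section WordConj

variable {L : Type u} (P : PartialGroup L)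

lemma sdn_comp (x : L) : ∀ w : List L,
    sdn P ((w.map fun n => (P.one, n)) ++ [(x, P.one)]) = w.map (P.cnj x) ++ [P.one] := by
  intro w
  induction w with
  | nil => simp [sdn]
  | cons n v ih =>
    have hpi : P.Pi ((v.map fun _ : L => P.one) ++ [x]) = x := by
      have := (P.insert_ones (l := v.map fun _ : L => P.one) (by simp)
        (u := []) (v := [x]) (by simpa using P.singleton_mem x)).2
      simpa [P.Pi_singleton] using this
    simp only [List.map_cons, List.cons_append, sdn, ih, List.append_eq]
    rw [show List.map Prod.fst ((List.map (fun n : L => (P.one, n)) v) ++ [(x, P.one)])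
      = (v.map fun _ : L => P.one) ++ [x] by simp, hpi]

end WordConj

section SD2

variable {L : Type u} {P : PartialGroup L} {X N : Set L} (h : IsIntSemidirect P X N)
include h

lemma conj_map {x : L} (hx : x ∈ X) (w : List L) (hw : ∀ g ∈ w, g ∈ N) :
    ((P.inv x :: (w ++ [x])) ∈ P.D ↔ w.map (P.cnj x) ∈ P.D) ∧
    ((P.inv x :: (w ++ [x])) ∈ P.D →
      P.Pi (P.inv x :: (w ++ [x])) = P.Pi (w.map (P.cnj x))) := by
  have hs := h.sd3 ((P.inv x, P.one) :: ((w.map fun n => (P.one, n)) ++ [(x, P.one)])) (by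
    intro r hr
    simp only [List.mem_cons, List.mem_append, List.mem_map] at hr
    rcases hr with rfl | ⟨a, ha, rfl⟩ | rfl | h0
    · exact ⟨h.subX.2.1 x hx, one_mem_N h⟩
    · exact ⟨one_mem_X h, hw a ha⟩
    · exact ⟨hx, one_mem_N h⟩
    · simp at h0)
  have hword : List.map (fun r : L × L => P.Pi [r.1, r.2])
      ((P.inv x, P.one) :: ((w.map fun n => (P.one, n)) ++ [(x, P.one)]))
      = P.inv x :: (w ++ [x]) := by
    simp [P.pi_pair_one, P.pi_one_pair, List.map_map, Function.comp_def]
  have hfst : List.map Prod.fst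
      ((P.inv x, P.one) :: ((w.map fun n => (P.one, n)) ++ [(x, P.one)]))
      = P.inv x :: ((w.map fun _ : L => P.one) ++ [x]) := by
    simp
  obtain ⟨hfm, hfe⟩ := P.insert_ones (l := w.map fun _ : L => P.one) (by simp)
    (u := [P.inv x]) (v := [x]) (by simpa using P.inv_pair_mem x)
  have hfm' : P.inv x :: ((w.map fun _ : L => P.one) ++ [x]) ∈ P.D := by
    simpa using hfm
  have hfe' : P.Pi (P.inv x :: ((w.map fun _ : L => P.one) ++ [x])) = P.one := by
    have h2 : P.Pi (P.inv x :: ((w.map fun _ : L => P.one) ++ [x]))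
        = P.Pi ([P.inv x] ++ [x]) := by simpa using hfe
    rw [h2]
    simpa using P.inv_pair_eq x
  have hsdn : sdn P ((P.inv x, P.one) :: ((w.map fun n => (P.one, n)) ++ [(x, P.one)]))
      = P.one :: (w.map (P.cnj x) ++ [P.one]) := by
    simp only [sdn, P.cnj_one_right]
    rw [sdn_comp P x w]
  rw [hword, hfst, hsdn] at hs
  constructor
  · constructor
    · intro hd
      have h2 := (hs.1.mp hd).2
      have h3 := P.append_right_mem (u := [P.one]) h2
      exact P.append_left_mem h3
    · intro hv
      exact hs.1.mpr ⟨hfm', P.one_cons_mem (P.append_one_mem hv)⟩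
  · intro hd
    have hv : w.map (P.cnj x) ∈ P.D := by
      have h2 := (hs.1.mp hd).2
      have h3 := P.append_right_mem (u := [P.one]) h2
      exact P.append_left_mem h3
    have e := hs.2 hd
    rw [hfe'] at e
    rw [e, P.pi_one_pair, P.pi_one_cons (P.append_one_mem hv), P.pi_append_one hv]

lemma cnj_inv_cnj {x n : L} (hx : x ∈ X) (hn : n ∈ N) :
    P.cnj (P.inv x) (P.cnj x n) = n := by
  rw [cnj_cnj h hx (h.subX.2.1 x hx) (P.pair_inv_mem x) hn, P.pair_inv_eq, P.cnj_one_left]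

lemma cnj_inv_cnj_list {x : L} (hx : x ∈ X) (w : List L) (hw : ∀ g ∈ w, g ∈ N) :
    (w.map (P.cnj x)).map (P.cnj (P.inv x)) = w := by
  rw [List.map_map]
  have h2 : ∀ n ∈ w, (P.cnj (P.inv x) ∘ P.cnj x) n = id n := by
    intro n hn
    simp only [Function.comp_apply, id_eq]
    exact cnj_inv_cnj h hx (hw n hn)
  rw [List.map_congr_left h2, List.map_id]

lemma map_mem_D {x : L} (hx : x ∈ X) (w : List L) (hw : ∀ g ∈ w, g ∈ N)
    (hD : w ∈ P.D) : w.map (P.cnj x) ∈ P.D := by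
  have hxinv : P.inv x ∈ X := h.subX.2.1 x hx
  have hvN : ∀ g ∈ w.map (P.cnj x), g ∈ N := by
    intro g hg
    simp only [List.mem_map] at hg
    obtain ⟨n, hn, rfl⟩ := hg
    exact cnj_mem_N h hx (hw n hn)
  obtain ⟨hiff, _⟩ := conj_map h hxinv (w.map (P.cnj x)) hvN
  rw [P.inv_inv, cnj_inv_cnj_list h hx w hw] at hiff
  have hlong : x :: (w.map (P.cnj x) ++ [P.inv x]) ∈ P.D := hiff.mpr hD
  have h2 := P.append_right_mem (u := [x]) hlong
  exact P.append_left_mem h2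

end SD2

theorem stmt12 {L : Type u} (P : PartialGroup L) (X N : Set L)
    (h : IsIntSemidirect P X N) :
    (∀ x ∈ X,
      Set.BijOn (P.cnj x) N N ∧
      (∀ w ∈ P.D, (∀ g ∈ w, g ∈ N) →
        w.map (P.cnj x) ∈ P.D ∧ P.Pi (w.map (P.cnj x)) = P.cnj x (P.Pi w)) ∧
      (∀ w : List L, (∀ g ∈ w, g ∈ N) → (w ∈ P.D ↔ w.map (P.cnj x) ∈ P.D))) ∧
    (∀ w ∈ P.D, (∀ g ∈ w, g ∈ X) →
      ∀ n ∈ N, P.cnj (P.Pi w) n = w.foldl (fun m x => P.cnj x m) n) ∧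
    (∀ x ∈ X, ∀ y ∈ X, [x, y] ∈ P.D →
      ∀ n ∈ N, P.cnj y (P.cnj x n) = P.cnj (P.Pi [x, y]) n) := by
  refine ⟨?_, ?_, ?_⟩
  · intro x hx
    have hxinv : P.inv x ∈ X := h.subX.2.1 x hx
    refine ⟨⟨fun n hn => cnj_mem_N h hx hn, ?_, ?_⟩, ?_, ?_⟩
    · intro n₁ h1 n₂ h2 he
      have k1 := cnj_inv_cnj h hx h1
      have k2 := cnj_inv_cnj h hx h2
      rw [← k1, ← k2, he]
    · intro n hn
      rw [← (h.sd1 x hx).2] at hn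
      exact hn
    · intro w hwD hwN
      have hvD := map_mem_D h hx w hwN hwD
      obtain ⟨hiff, heq⟩ := conj_map h hx w hwN
      have hlong : P.inv x :: (w ++ [x]) ∈ P.D := hiff.mpr hvD
      refine ⟨hvD, ?_⟩
      have e1 := heq hlong
      have e2 : P.Pi (P.inv x :: (w ++ [x])) = P.cnj x (P.Pi w) := by
        have h3 := P.pg3_eq [P.inv x] w [x] (by simpa using hlong)
        rw [show P.cnj x (P.Pi w) = P.Pi [P.inv x, P.Pi w, x] from rfl]
        simpa using h3
      rw [← e1, e2]
    · intro w hwN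
      constructor
      · exact map_mem_D h hx w hwN
      · intro hv
        have hvN : ∀ g ∈ w.map (P.cnj x), g ∈ N := by
          intro g hg
          simp only [List.mem_map] at hg
          obtain ⟨n, hn, rfl⟩ := hg
          exact cnj_mem_N h hx (hwN n hn)
        have h2 := map_mem_D h hxinv (w.map (P.cnj x)) hvN hv
        rwa [cnj_inv_cnj_list h hx w hwN] at h2
  · intro w
    induction w with
    | nil => intro _ _ n hn; simp
    | cons x v ih =>
      intro hD hX n hn
      have hx : x ∈ X := hX x (by simp)
      have hvD : v ∈ P.D := P.append_right_mem (u := [x]) hD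
      have hvX : ∀ g ∈ v, g ∈ X := fun g hg => hX g (by simp [hg])
      have hPvX : P.Pi v ∈ X := h.subX.2.2 v hvD hvX
      have hxv : [x, P.Pi v] ∈ P.D := by
        simpa using P.pg3_mem [x] v [] (by simpa using hD)
      have heq : P.Pi (x :: v) = P.Pi [x, P.Pi v] := by
        have := P.pg3_eq [x] v [] (by simpa using hD)
        simpa using this
      rw [heq, ← cnj_cnj h hx hPvX hxv hn]
      simpa using ih hvD hvX (P.cnj x n) (cnj_mem_N h hx hn)
  · intro x hx y hy hxy n hn
    exact cnj_cnj h hx hy hxy hn
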